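/- arXiv:math/0512052 — 2 statements merged into one kernel-verified Lean document; each statement's English description precedes it below -/
import Mathlib

section
/- The number of unordered direct sum decompositions (splittings) of an n-dimensional F_q-vector space into nonzero subspaces, summed with weight x^n/γ_n, gives the formal power series identity: ∑_{n≥0} s_n x^n/γ_n = exp(∑_{n≥1} x^n/γ_n), where s_n is the number of splittings of E_n (with s_0 = 1). -/
/-- `γ_m = |GL_m(F_q)| = ∏_{i=0}^{m-1} (q^m - q^i)`. -/
def gammaQ (q m : ℕ) : ℕ := ∏ i ∈ Finset.range m, (q ^ m - q ^ i)

/-- The number of splittings (unordered direct sum decompositions into nonzero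
subspaces) of the `n`-dimensional space `F^n`. -/
noncomputable def splitCount (F : Type) [Field F] [Fintype F] (n : ℕ) : ℕ :=
  Nat.card {D : Finset (Submodule F (Fin n → F)) //
    (⊥ : Submodule F (Fin n → F)) ∉ D ∧
    sSupIndep (D : Set (Submodule F (Fin n → F))) ∧
    sSup (D : Set (Submodule F (Fin n → F))) = ⊤}

/-- The formal exponential `exp(f)` of a power series `f` with zero constant term,
given coefficientwise by `exp(f) = ∑_{n ≥ 0} fⁿ/n!`. -/
noncomputable def expComp (f : PowerSeries ℚ) : PowerSeries ℚ :=
  PowerSeries.mk fun j =>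
    ∑ n ∈ Finset.range (j + 1), (n.factorial : ℚ)⁻¹ * PowerSeries.coeff j (f ^ n)

/-! A basis of `Eₙ` whose index set is cut into blocks of sizes `m₁, …, m_k` is the same
thing as an ordered decomposition `Eₙ = V₁ ⊕ ⋯ ⊕ V_k` with `dim Vᵢ = mᵢ` together with a
basis of each `Vᵢ`. Counting bases, there are `γₙ / ∏ γ_{mᵢ}` such decompositions. Summing
over the compositions `m` of `n` (all `mᵢ ≥ 1`), the number of ordered splittings into `k`
parts is `γₙ [xⁿ] f^k` with `f = ∑_{m ≥ 1} x^m / γ_m`, and it is `k!` times the number of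
splittings into `k` parts. Dividing by `k!` and summing over `k` gives `[xⁿ] exp f`. -/

open Finset Module Function PowerSeries Submodule

lemma gammaQ_ne_zero {q : ℕ} (hq : 1 < q) (m : ℕ) : gammaQ q m ≠ 0 :=
  prod_ne_zero_iff.mpr fun _ hi =>
    Nat.sub_ne_zero_of_lt (Nat.pow_lt_pow_right hq (mem_range.mp hi))

noncomputable def injectiveImageEquiv {X : Type*} [DecidableEq X] {k : ℕ} (D : Finset X)
    (hD : D.card = k) : {f : Fin k → X // Injective f ∧ univ.image f = D} ≃ (Fin k ≃ D) where
  toFun f := Equiv.ofBijective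
    (fun i => ⟨f.1 i, f.2.2.subset (mem_image_of_mem f.1 (mem_univ i))⟩)
    ((Fintype.bijective_iff_injective_and_card _).mpr
      ⟨fun i j h => f.2.1 (congrArg Subtype.val h), by simp [hD]⟩)
  invFun e := ⟨fun i => e i, Subtype.val_injective.comp e.injective, by
    ext x
    simp only [mem_image, mem_univ, true_and]
    exact ⟨fun ⟨i, hi⟩ => hi ▸ (e i).2, fun hx => ⟨e.symm ⟨x, hx⟩, by simp⟩⟩⟩
  left_inv f := rfl
  right_inv e := by ext; rfl

lemma card_injective_image_eq {X : Type*} [DecidableEq X] {k : ℕ} (D : Finset X)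
    (hD : D.card = k) :
    Nat.card {f : Fin k → X // Injective f ∧ univ.image f = D} = k.factorial := by
  rw [Nat.card_congr (injectiveImageEquiv D hD), Nat.card_eq_fintype_card,
    Fintype.card_equiv (finCongr hD.symm |>.trans D.equivFin.symm), Fintype.card_fin]

lemma Nat.card_subtype_eq_sum_card_fiber {α β : Type*} [Finite α] [DecidableEq β]
    (P : α → Prop) (g : α → β) (t : Finset β) (h : ∀ a, P a → g a ∈ t) :
    Nat.card {a // P a} = ∑ b ∈ t, Nat.card {a // P a ∧ g a = b} := by
  classical
  have := Fintype.ofFinite α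
  simp only [Nat.card_eq_fintype_card, Fintype.card_subtype]
  rw [card_eq_sum_card_fiberwise (s := univ.filter P) (t := t)
    fun a ha => h a (by simpa using ha)]
  simp [filter_filter]

lemma card_injective_image_pred {X : Type*} [Finite X] [DecidableEq X] {k : ℕ}
    (P : Finset X → Prop) :
    Nat.card {f : Fin k → X // Injective f ∧ P (univ.image f)} =
      k.factorial * Nat.card {D : Finset X // P D ∧ D.card = k} := by
  classical
  have := Fintype.ofFinite X
  rw [Nat.card_subtype_eq_sum_card_fiber _ (fun f => univ.image f) {D | P D ∧ D.card = k}
    fun f hf => by simpa [card_image_of_injective _ hf.1] using hf.2]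
  rw [sum_congr rfl fun D hD => ?_, sum_const, smul_eq_mul, mul_comm, Nat.card_eq_fintype_card,
    Fintype.card_subtype]
  obtain ⟨hPD, hD⟩ := (mem_filter.mp hD).2
  rw [← card_injective_image_eq D hD]
  exact Nat.card_congr (Equiv.subtypeEquivRight fun f => by
    constructor
    · exact fun ⟨⟨hf, _⟩, himg⟩ => ⟨hf, himg⟩
    · exact fun ⟨hf, himg⟩ => ⟨⟨hf, himg ▸ hPD⟩, himg⟩)

lemma PowerSeries.coeff_pow_eq_sum_piAntidiag {R : Type*} [CommSemiring R] (φ : R⟦X⟧)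
    (k n : ℕ) :
    coeff n (φ ^ k) = ∑ m ∈ piAntidiag (univ : Finset (Fin k)) n, ∏ i, coeff (m i) φ := by
  rw [← Fin.prod_const, coeff_prod, finsuppAntidiag, sum_map]
  exact sum_attach (piAntidiag univ n) fun m => ∏ i, coeff (m i) φ

instance Submodule.finite {R M : Type*} [Semiring R] [AddCommMonoid M] [Module R M] [Finite M] :
    Finite (Submodule R M) :=
  _root_.Finite.of_injective _ SetLike.coe_injective

section Splitting

variable {K V : Type*} [DivisionRing K] [AddCommGroup V] [Module K V]

def IsSplitting (D : Finset (Submodule K V)) : Prop :=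
  ⊥ ∉ D ∧ sSupIndep (D : Set (Submodule K V)) ∧ sSup (D : Set (Submodule K V)) = ⊤

def IsOrderedSplitting {ι : Type*} [DecidableEq ι] (f : ι → Submodule K V) : Prop :=
  (∀ i, f i ≠ ⊥) ∧ DirectSum.IsInternal f

lemma injective_and_isSplitting_image_iff [DecidableEq (Submodule K V)] {ι : Type*} [Fintype ι]
    [DecidableEq ι] (f : ι → Submodule K V) :
    Injective f ∧ IsSplitting (univ.image f) ↔ IsOrderedSplitting f := by
  simp only [IsSplitting, IsOrderedSplitting, coe_image, coe_univ, Set.image_univ, sSup_range,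
    mem_image, mem_univ, true_and, not_exists,
    DirectSum.isInternal_submodule_iff_iSupIndep_and_iSup_eq_top]
  constructor
  · rintro ⟨hinj, hbot, hind, hsup⟩
    exact ⟨hbot, ((sSupIndep_iff _).mp hind).comp (Set.rangeFactorization_injective.mpr hinj),
      hsup⟩
  · rintro ⟨hbot, hind, hsup⟩
    exact ⟨hind.injective hbot, hbot, hind.sSupIndep_range, hsup⟩

lemma IsSplitting.card_le_finrank [Module.Finite K V] {D : Finset (Submodule K V)}
    (hD : IsSplitting D) : D.card ≤ finrank K V := by
  have hind := (sSupIndep_iff _).mp hD.2.1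
  have hne : ∀ p : ↥(D : Set (Submodule K V)), p.1 ≠ ⊥ := by
    rintro ⟨p, hp⟩ rfl
    exact hD.1 hp
  classical
  calc D.card = Fintype.card {p : ↥(D : Set (Submodule K V)) // p.1 ≠ ⊥} := by
        rw [Fintype.card_congr (Equiv.subtypeUnivEquiv hne)]; simp
    _ ≤ finrank K V := hind.subtype_ne_bot_le_finrank

lemma DirectSum.IsInternal.sum_finrank [Module.Finite K V] {ι : Type*} [Fintype ι]
    [DecidableEq ι] {f : ι → Submodule K V} (hf : DirectSum.IsInternal f) :
    ∑ i, finrank K (f i) = finrank K V := by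
  simpa using (finrank_eq_card_basis (hf.collectedBasis fun i => finBasis K (f i))).symm

lemma card_orderedSplitting_eq_factorial_mul [Finite V] [DecidableEq (Submodule K V)] (k : ℕ) :
    Nat.card {f : Fin k → Submodule K V // IsOrderedSplitting f} =
      k.factorial * Nat.card {D : Finset (Submodule K V) // IsSplitting D ∧ D.card = k} := by
  rw [← card_injective_image_pred]
  exact Nat.card_congr
    (Equiv.subtypeEquivRight fun f => (injective_and_isSplitting_image_iff f).symm)

lemma card_splitting_eq_sum [Finite V] :
    Nat.card {D : Finset (Submodule K V) // IsSplitting D} =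
      ∑ k ∈ range (finrank K V + 1),
        Nat.card {D : Finset (Submodule K V) // IsSplitting D ∧ D.card = k} :=
  Nat.card_subtype_eq_sum_card_fiber _ _ _ fun _ hD => mem_range_succ_iff.mpr hD.card_le_finrank

end Splitting

section Blocks

variable {K V : Type*} [DivisionRing K] [AddCommGroup V] [Module K V]
variable {ι : Type*} {m : ι → ℕ} (b : Basis (Σ i, Fin (m i)) K V)

noncomputable def Module.Basis.blockSpan (i : ι) : Submodule K V :=
  span K (Set.range fun x : Fin (m i) => b ⟨i, x⟩)

lemma Module.Basis.linearIndependent_block (i : ι) :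
    LinearIndependent K fun x : Fin (m i) => b ⟨i, x⟩ :=
  b.linearIndependent.comp (Sigma.mk i) sigma_mk_injective

lemma Module.Basis.range_block (i : ι) :
    Set.range (fun x : Fin (m i) => b ⟨i, x⟩) = b '' {p | p.1 = i} := by
  ext v
  constructor
  · rintro ⟨x, rfl⟩
    exact ⟨⟨i, x⟩, rfl, rfl⟩
  · rintro ⟨⟨i', x⟩, rfl, rfl⟩
    exact ⟨x, rfl⟩

lemma Module.Basis.finrank_blockSpan (i : ι) : finrank K (b.blockSpan i) = m i := by
  rw [blockSpan, finrank_span_eq_card (b.linearIndependent_block i), Fintype.card_fin]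

variable [DecidableEq ι]

variable (K V) in
abbrev InternalDecomposition (m : ι → ℕ) : Type _ :=
  {f : ι → Submodule K V // DirectSum.IsInternal f ∧ ∀ i, finrank K (f i) = m i}

lemma Module.Basis.isInternal_blockSpan : DirectSum.IsInternal b.blockSpan := by
  refine (DirectSum.isInternal_submodule_iff_iSupIndep_and_iSup_eq_top _).mpr ⟨fun i => ?_, ?_⟩
  · refine (b.linearIndependent.disjoint_span_image
      (disjoint_compl_right (a := {p | p.1 = i}))).mono (by rw [blockSpan, range_block])
      (iSup₂_le fun j hj => span_mono ?_)
    rw [range_block]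
    exact Set.image_mono fun p (hp : p.1 = j) => (hp.trans_ne hj : p.1 ≠ i)
  · have hU : (⋃ i, Set.range fun x : Fin (m i) => b ⟨i, x⟩) = Set.range b := by
      ext v
      simp only [Set.mem_iUnion, Set.mem_range, Sigma.exists]
    change ⨆ i, span K (Set.range fun x : Fin (m i) => b ⟨i, x⟩) = ⊤
    rw [← span_iUnion, hU, b.span_eq]

noncomputable def Module.Basis.toInternalDecomposition : InternalDecomposition K V m :=
  ⟨b.blockSpan, b.isInternal_blockSpan, b.finrank_blockSpan⟩

variable (m) in
noncomputable def basisFiberEquiv (f : InternalDecomposition K V m) :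
    {b : Basis (Σ i, Fin (m i)) K V // b.toInternalDecomposition = f} ≃
      ((i : ι) → Basis (Fin (m i)) K (f.1 i)) where
  toFun b i := (Basis.span (b.1.linearIndependent_block i)).map
    (LinearEquiv.ofEq _ _ (congrFun (congrArg Subtype.val b.2) i))
  invFun v := ⟨f.2.1.collectedBasis v, by
    refine Subtype.ext (funext fun i => ?_)
    change span K (Set.range fun x : Fin (m i) => f.2.1.collectedBasis v ⟨i, x⟩) = f.1 i
    have hc : (fun x : Fin (m i) => f.2.1.collectedBasis v ⟨i, x⟩) =
        (f.1 i).subtype ∘ v i := by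
      funext x
      rw [f.2.1.collectedBasis_coe v]
      rfl
    rw [hc, Set.range_comp, span_image, (v i).span_eq, map_subtype_top]⟩
  left_inv b := by
    ext ⟨i, x⟩
    rw [f.2.1.collectedBasis_coe]
    simp [Basis.span_apply]
    rfl
  right_inv v := by
    ext i x
    simp [Basis.span_apply, f.2.1.collectedBasis_coe]
    rfl

variable (m) in
noncomputable def basisSigmaEquiv :
    Basis (Σ i, Fin (m i)) K V ≃
      Σ f : InternalDecomposition K V m, ((i : ι) → Basis (Fin (m i)) K (f.1 i)) :=
  (Equiv.sigmaFiberEquiv fun b : Basis (Σ i, Fin (m i)) K V =>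
    b.toInternalDecomposition).symm.trans (Equiv.sigmaCongrRight (basisFiberEquiv m))

end Blocks

section Count

instance Module.Basis.finite {ι R M : Type*} [Finite ι] [Semiring R] [AddCommMonoid M]
    [Module R M] [Finite M] : Finite (Basis ι R M) :=
  _root_.Finite.of_injective _ DFunLike.coe_injective

variable {F V : Type*} [Field F] [Fintype F] [AddCommGroup V] [Module F V] [Finite V]

lemma card_basis_fin :
    Nat.card (Basis (Fin (finrank F V)) F V) = gammaQ (Fintype.card F) (finrank F V) := by
  let e : Basis (Fin (finrank F V)) F V ≃
      {s : Fin (finrank F V) → V // LinearIndependent F s} :=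
    { toFun b := ⟨b, b.linearIndependent⟩
      invFun s := basisOfLinearIndependentOfCardEqFinrank' s.1 s.2 (Fintype.card_fin _)
      left_inv b := by ext; simp
      right_inv s := by ext; simp }
  rw [Nat.card_congr e, card_linearIndependent le_rfl, gammaQ]
  exact Fin.prod_univ_eq_prod_range (fun i => _ ^ _ - _ ^ i) _

lemma card_basis {ι : Type*} [Fintype ι] (hι : Fintype.card ι = finrank F V) :
    Nat.card (Basis ι F V) = gammaQ (Fintype.card F) (finrank F V) := by
  let e : ι ≃ Fin (finrank F V) := Fintype.equivFinOfCardEq hι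
  rw [← card_basis_fin]
  exact Nat.card_congr
    { toFun b := b.reindex e, invFun b := b.reindex e.symm,
      left_inv b := by ext; simp, right_inv b := by ext; simp }

lemma card_internalDecomposition_mul_prod {ι : Type*} [Fintype ι] [DecidableEq ι]
    {m : ι → ℕ} (hm : ∑ i, m i = finrank F V) :
    Nat.card (InternalDecomposition F V m) * ∏ i, gammaQ (Fintype.card F) (m i) =
      gammaQ (Fintype.card F) (finrank F V) := by
  have := Fintype.ofFinite (InternalDecomposition F V m)
  have hfiber (f : InternalDecomposition F V m) :
      Nat.card ((i : ι) → Basis (Fin (m i)) F (f.1 i)) =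
        ∏ i, gammaQ (Fintype.card F) (m i) := by
    rw [Nat.card_pi]
    refine prod_congr rfl fun i _ => ?_
    rw [card_basis (by rw [Fintype.card_fin, f.2.2 i]), f.2.2 i]
  rw [← card_basis (ι := Σ i, Fin (m i)) (by simp [hm]), Nat.card_congr (basisSigmaEquiv m),
    Nat.card_sigma, sum_congr rfl fun f _ => hfiber f, sum_const, card_univ,
    Nat.card_eq_fintype_card, smul_eq_mul]

lemma card_orderedSplitting_fiber {k : ℕ} {m : Fin k → ℕ} (hm : ∑ i, m i = finrank F V) :
    (Nat.card {f : Fin k → Submodule F V //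
        IsOrderedSplitting f ∧ (fun i => finrank F (f i)) = m} : ℚ) =
      gammaQ (Fintype.card F) (finrank F V) *
        ∏ i, if m i = 0 then 0 else 1 / (gammaQ (Fintype.card F) (m i) : ℚ) := by
  by_cases hpos : ∀ i, m i ≠ 0
  · have e : {f : Fin k → Submodule F V // IsOrderedSplitting f ∧ (fun i => finrank F (f i)) = m}
        ≃ InternalDecomposition F V m := Equiv.subtypeEquivRight fun f => by
      rw [funext_iff]
      refine ⟨fun ⟨⟨_, hf⟩, hdim⟩ => ⟨hf, hdim⟩,
        fun ⟨hf, hdim⟩ => ⟨⟨fun i hi => hpos i ?_, hf⟩, hdim⟩⟩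
      rw [← hdim i, hi, finrank_bot]
    have hcount := congrArg (Nat.cast : ℕ → ℚ) (card_internalDecomposition_mul_prod (F := F) hm)
    push_cast at hcount
    have hprod : (∏ i, if m i = 0 then 0 else 1 / (gammaQ (Fintype.card F) (m i) : ℚ)) =
        ∏ i, 1 / (gammaQ (Fintype.card F) (m i) : ℚ) :=
      prod_congr rfl fun i _ => if_neg (hpos i)
    have hγ : ∏ i, (gammaQ (Fintype.card F) (m i) : ℚ) ≠ 0 := prod_ne_zero_iff.mpr fun i _ =>
      Nat.cast_ne_zero.mpr (gammaQ_ne_zero Fintype.one_lt_card (m i))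
    rw [Nat.card_congr e, hprod, prod_div_distrib, prod_const_one, ← hcount, mul_one_div,
      mul_div_cancel_right₀ _ hγ]
  · obtain ⟨i, hi⟩ : ∃ i, m i = 0 := by simpa using hpos
    have : IsEmpty {f : Fin k → Submodule F V //
        IsOrderedSplitting f ∧ (fun i => finrank F (f i)) = m} :=
      ⟨fun ⟨f, ⟨hbot, _⟩, hdim⟩ =>
        hbot i (Submodule.finrank_eq_zero.mp ((congrFun hdim i).trans hi))⟩
    rw [Nat.card_of_isEmpty, prod_eq_zero (mem_univ i) (by rw [if_pos hi])]
    simp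

lemma card_orderedSplitting (k : ℕ) :
    (Nat.card {f : Fin k → Submodule F V // IsOrderedSplitting f} : ℚ) =
      gammaQ (Fintype.card F) (finrank F V) *
        ∑ m ∈ piAntidiag (univ : Finset (Fin k)) (finrank F V),
          ∏ i, if m i = 0 then 0 else 1 / (gammaQ (Fintype.card F) (m i) : ℚ) := by
  rw [Nat.card_subtype_eq_sum_card_fiber _ (fun (f : Fin k → Submodule F V) i => finrank F (f i))
    _ fun f hf => mem_piAntidiag.mpr ⟨by simpa using hf.2.sum_finrank, by simp⟩,
    Nat.cast_sum, mul_sum]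
  exact sum_congr rfl fun m hm =>
    card_orderedSplitting_fiber (by simpa using (mem_piAntidiag.mp hm).1)

end Count

lemma splitCount_eq_sum (F : Type) [Field F] [Fintype F] (n : ℕ) :
    splitCount F n = ∑ k ∈ range (n + 1),
      Nat.card {D : Finset (Submodule F (Fin n → F)) // IsSplitting D ∧ D.card = k} :=
  (card_splitting_eq_sum (K := F) (V := Fin n → F)).trans (by rw [finrank_fin_fun])

/-- `∑_{n≥0} s_n xⁿ/γ_n = exp(∑_{n≥1} xⁿ/γ_n)`, where `s_n` is the number of
splittings of an `n`-dimensional `F_q`-vector space. -/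
theorem splittings_generating_series (F : Type) [Field F] [Fintype F] :
    PowerSeries.mk (fun n => (splitCount F n : ℚ) / (gammaQ (Fintype.card F) n : ℚ)) =
      expComp (PowerSeries.mk fun n =>
        if n = 0 then 0 else 1 / (gammaQ (Fintype.card F) n : ℚ)) := by
  classical
  ext n
  have hγ : (gammaQ (Fintype.card F) n : ℚ) ≠ 0 :=
    Nat.cast_ne_zero.mpr (gammaQ_ne_zero Fintype.one_lt_card n)
  rw [coeff_mk, expComp, coeff_mk, splitCount_eq_sum, Nat.cast_sum, sum_div]
  refine sum_congr rfl fun k _ => ?_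
  have hk := card_orderedSplitting (F := F) (V := Fin n → F) k
  rw [card_orderedSplitting_eq_factorial_mul, finrank_fin_fun] at hk
  push_cast at hk
  simp only [coeff_pow_eq_sum_piAntidiag, coeff_mk]
  field_simp
  linear_combination hk
end

section
/- The number of diagonalizations of endomorphisms of an n-dimensional F_q-vector space, i.e., pairs (α, {V_1,...,V_n}) where V = V_1 ⊕ ... ⊕ V_n with dim V_i = 1 and α restricts to a scalar on each V_i, has generating series ∑_n d_n x^n/γ_n = exp(qx/(q-1)). -/
/-- The number of diagonalizations of endomorphisms of `F^n`: pairs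
`(α, {V₁, …, Vₙ})` with `F^n = V₁ ⊕ ⋯ ⊕ Vₙ`, `dim Vᵢ = 1`, and `α` restricting to a
scalar on each `Vᵢ`. -/
noncomputable def diagCount (F : Type) [Field F] [Fintype F] (n : ℕ) : ℕ :=
  Nat.card {p : ((Fin n → F) →ₗ[F] (Fin n → F)) × Finset (Submodule F (Fin n → F)) //
    p.2.card = n ∧
    (⊥ : Submodule F (Fin n → F)) ∉ p.2 ∧
    sSupIndep (p.2 : Set (Submodule F (Fin n → F))) ∧
    sSup (p.2 : Set (Submodule F (Fin n → F))) = ⊤ ∧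
    ∀ W ∈ p.2, Module.finrank F W = 1 ∧ ∃ c : F, ∀ x ∈ W, p.1 x = c • x}

/-!
Forgetting `α` maps a diagonalization to an unordered decomposition of `V` into `n` lines, and
over each such decomposition `α` is determined by a free choice of one scalar per line: `q ^ n`
choices. Ordering the lines (`n!` ways) and then choosing a nonzero vector on each line
(`(q - 1) ^ n` ways) produces every ordered basis exactly once, and there are `γ_n` of those.
Hence `d_n * n! * (q - 1) ^ n = q ^ n * γ_n`, i.e. `d_n / γ_n = (q / (q - 1)) ^ n / n!`.
-/

open Module

theorem Nat.card_eq_card_mul_of_card_fiber {α β : Type*} [Finite α] [Finite β] (f : α → β)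
    {k : ℕ} (hk : ∀ b, Nat.card {a // f a = b} = k) : Nat.card α = Nat.card β * k := by
  have := Fintype.ofFinite β
  rw [← Nat.card_congr (Equiv.sigmaFiberEquiv f), Nat.card_sigma,
    Finset.sum_congr rfl fun b _ => hk b, Finset.sum_const, Finset.card_univ, smul_eq_mul,
    Nat.card_eq_fintype_card]

instance LinearMap.finite_of_finite {R M N : Type*} [Semiring R] [AddCommMonoid M] [Module R M]
    [AddCommMonoid N] [Module R N] [Finite M] [Finite N] : Finite (M →ₗ[R] N) :=
  Finite.of_injective _ DFunLike.coe_injective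

theorem LinearMap.ext_of_iSup_eq_top {R M N : Type*} [Semiring R] [AddCommMonoid M] [Module R M]
    [AddCommMonoid N] [Module R N] {ι : Sort*} {A : ι → Submodule R M} {α β : M →ₗ[R] N}
    (hA : iSup A = ⊤) (hαβ : ∀ i, ∀ x ∈ A i, α x = β x) : α = β := by
  have hle : iSup A ≤ LinearMap.eqLocus α β := iSup_le fun i x hx => hαβ i x hx
  exact LinearMap.ext fun x => hle (hA ▸ Submodule.mem_top)

section

variable {K V : Type*} [Field K] [AddCommGroup V] [Module K V]

namespace DirectSum.IsInternal

variable {ι : Type*} [DecidableEq ι] {A : ι → Submodule K V}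

noncomputable def diagonalEnd (h : IsInternal A) (c : ι → K) : V →ₗ[K] V :=
  toModule K ι V (fun i => c i • (A i).subtype) ∘ₗ
    (LinearEquiv.ofBijective (coeLinearMap A) h).symm.toLinearMap

theorem diagonalEnd_apply_of_mem (h : IsInternal A) (c : ι → K) {i : ι} {x : V}
    (hx : x ∈ A i) : h.diagonalEnd c x = c i • x := by
  have hsymm : (LinearEquiv.ofBijective (coeLinearMap A) h).symm x = lof K ι _ i ⟨x, hx⟩ :=
    (LinearEquiv.symm_apply_eq _).2 (coeLinearMap_lof (R := K) A i ⟨x, hx⟩).symm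
  simp [diagonalEnd, hsymm]

theorem diagonalEnd_injective (h : IsInternal A) (hA : ∀ i, A i ≠ ⊥) :
    Function.Injective h.diagonalEnd := by
  intro c d hcd
  funext i
  obtain ⟨x, hx, hx0⟩ := (Submodule.ne_bot_iff _).1 (hA i)
  refine smul_left_injective K hx0 ?_
  simpa [h.diagonalEnd_apply_of_mem _ hx] using LinearMap.congr_fun hcd x

theorem range_diagonalEnd (h : IsInternal A) :
    Set.range h.diagonalEnd = {α | ∀ i, ∃ c : K, ∀ x ∈ A i, α x = c • x} := by
  ext α
  constructor
  · rintro ⟨c, rfl⟩ i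
    exact ⟨c i, fun x hx => h.diagonalEnd_apply_of_mem c hx⟩
  · intro hα
    choose c hc using hα
    exact ⟨c, LinearMap.ext_of_iSup_eq_top h.submodule_iSup_eq_top fun i x hx => by
      rw [h.diagonalEnd_apply_of_mem c hx, hc i x hx]⟩

theorem card_scalar_on_summands (h : IsInternal A) (hA : ∀ i, A i ≠ ⊥) :
    Nat.card {α : V →ₗ[K] V // ∀ i, ∃ c : K, ∀ x ∈ A i, α x = c • x} =
      Nat.card (ι → K) :=
  Nat.card_congr ((Equiv.ofInjective _ (h.diagonalEnd_injective hA)).trans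
    (Equiv.setCongr h.range_diagonalEnd)).symm

end DirectSum.IsInternal

namespace Submodule

theorem span_singleton_eq_of_finrank_eq_one {W : Submodule K V} (hW : finrank K W = 1) {x : V}
    (hx : x ∈ W) (hx0 : x ≠ 0) : (K ∙ x) = W :=
  have : FiniteDimensional K W := Module.finite_of_finrank_eq_succ hW
  eq_of_le_of_finrank_eq ((span_singleton_le_iff_mem x W).2 hx)
    (by rw [finrank_span_singleton hx0, hW])

theorem card_ne_zero_of_finrank_eq_one [Fintype K] {W : Submodule K V} (hW : finrank K W = 1) :
    Nat.card {x : W // x ≠ 0} = Fintype.card K - 1 := by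
  have : Module.Finite K W := Module.finite_of_finrank_eq_succ hW
  have : Finite W := (Module.finite_of_finite K : Finite W)
  have : Fintype W := Fintype.ofFinite W
  classical
  rw [Nat.card_eq_fintype_card, Fintype.card_subtype_compl, Fintype.card_subtype_eq,
    ← Nat.card_eq_fintype_card, Module.natCard_eq_pow_finrank (K := K), hW, pow_one,
    Nat.card_eq_fintype_card]

end Submodule

variable (K V) in
abbrev OrderedLineDecomposition (n : ℕ) : Type _ :=
  {f : Fin n → Submodule K V // iSupIndep f ∧ ⨆ i, f i = ⊤ ∧ ∀ i, finrank K (f i) = 1}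

variable (K V) in
abbrev LineDecomposition (n : ℕ) : Type _ :=
  {D : Finset (Submodule K V) //
    D.card = n ∧
    (⊥ : Submodule K V) ∉ D ∧
    sSupIndep (D : Set (Submodule K V)) ∧
    sSup (D : Set (Submodule K V)) = ⊤ ∧
    ∀ W ∈ D, finrank K W = 1}

-- Spelled exactly as the set counted by `diagCount`, so that `diagCount F n` unfolds to its card.
variable (K V) in
abbrev Diagonalization (n : ℕ) : Type _ :=
  {p : (V →ₗ[K] V) × Finset (Submodule K V) //
    p.2.card = n ∧
    (⊥ : Submodule K V) ∉ p.2 ∧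
    sSupIndep (p.2 : Set (Submodule K V)) ∧
    sSup (p.2 : Set (Submodule K V)) = ⊤ ∧
    ∀ W ∈ p.2, finrank K W = 1 ∧ ∃ c : K, ∀ x ∈ W, p.1 x = c • x}

variable {n : ℕ}

namespace OrderedLineDecomposition

theorem ne_bot (f : OrderedLineDecomposition K V n) (i : Fin n) : f.1 i ≠ ⊥ := by
  intro h
  have := f.2.2.2 i
  rw [h, finrank_bot] at this
  exact zero_ne_one this

theorem injective (f : OrderedLineDecomposition K V n) : Function.Injective f.1 :=
  f.2.1.injective f.ne_bot

def ofLinearIndependent [FiniteDimensional K V] (hn : finrank K V = n)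
    (s : {s : Fin n → V // LinearIndependent K s}) : OrderedLineDecomposition K V n :=
  ⟨fun i => K ∙ s.1 i, s.2.iSupIndep_span_singleton,
    by rw [← Submodule.span_range_eq_iSup,
      s.2.span_eq_top_of_card_eq_finrank' (by rw [Fintype.card_fin, hn])],
    fun i => finrank_span_singleton (s.2.ne_zero i)⟩

def ofLinearIndependentFiberEquiv [FiniteDimensional K V] (hn : finrank K V = n)
    (f : OrderedLineDecomposition K V n) :
    {s // ofLinearIndependent hn s = f} ≃ ∀ i, {x : f.1 i // x ≠ 0} where
  toFun s i := ⟨⟨s.1.1 i, congrArg (·.1 i) s.2 ▸ Submodule.mem_span_singleton_self _⟩,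
    by simpa using s.1.2.ne_zero i⟩
  invFun v := ⟨⟨fun i => v i, iSupIndep.linearIndependent _ f.2.1 (fun i => (v i).1.2)
      fun i => by simpa using (v i).2⟩,
    Subtype.ext <| funext fun i =>
      Submodule.span_singleton_eq_of_finrank_eq_one (f.2.2.2 i) (v i).1.2
        (by simpa using (v i).2)⟩
  left_inv s := rfl
  right_inv v := rfl

theorem card_linearIndependent [Fintype K] [Finite V] (hn : finrank K V = n) :
    Nat.card {s : Fin n → V // LinearIndependent K s} =
      Nat.card (OrderedLineDecomposition K V n) * (Fintype.card K - 1) ^ n := by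
  have : FiniteDimensional K V := Module.Finite.of_finite
  refine Nat.card_eq_card_mul_of_card_fiber (ofLinearIndependent hn) fun f => ?_
  rw [Nat.card_congr (ofLinearIndependentFiberEquiv hn f), Nat.card_pi]
  simp [Submodule.card_ne_zero_of_finrank_eq_one (f.2.2.2 _)]

end OrderedLineDecomposition

namespace LineDecomposition

theorem ne_bot (D : LineDecomposition K V n) {W : Submodule K V} (hW : W ∈ D.1) : W ≠ ⊥ := by
  rintro rfl
  exact D.2.2.1 hW

theorem iSupIndep (D : LineDecomposition K V n) :
    _root_.iSupIndep fun W : D.1 => (W : Submodule K V) :=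
  (sSupIndep_iff _).1 D.2.2.2.1

theorem iSup_eq_top (D : LineDecomposition K V n) : ⨆ W : D.1, (W : Submodule K V) = ⊤ :=
  (sSup_eq_iSup' _).symm.trans D.2.2.2.2.1

theorem isInternal [DecidableEq (Submodule K V)] (D : LineDecomposition K V n) :
    DirectSum.IsInternal fun W : D.1 => (W : Submodule K V) :=
  (DirectSum.isInternal_submodule_iff_iSupIndep_and_iSup_eq_top _).2
    ⟨D.iSupIndep, D.iSup_eq_top⟩

def ofOrdered (f : OrderedLineDecomposition K V n) : LineDecomposition K V n :=
  ⟨Finset.univ.map ⟨f.1, f.injective⟩,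
    by rw [Finset.card_map, Finset.card_univ, Fintype.card_fin],
    by simpa using f.ne_bot,
    by simpa using f.2.1.sSupIndep_range,
    by simpa [sSup_range] using f.2.2.1,
    by simpa using f.2.2.2⟩

def _root_.OrderedLineDecomposition.ofEquiv (D : LineDecomposition K V n) (e : Fin n ≃ D.1) :
    OrderedLineDecomposition K V n :=
  ⟨fun i => e i, D.iSupIndep.comp e.injective,
    (e.iSup_comp (g := fun W : D.1 => (W : Submodule K V))).trans D.iSup_eq_top,
    fun i => D.2.2.2.2.2 _ (e i).2⟩

noncomputable def ofOrderedFiberEquiv (D : LineDecomposition K V n) :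
    {f // ofOrdered f = D} ≃ (Fin n ≃ D.1) where
  toFun f := Equiv.ofBijective
    (fun i => ⟨f.1.1 i,
      congrArg Subtype.val f.2 ▸ Finset.mem_map_of_mem _ (Finset.mem_univ i)⟩)
    ⟨fun i j hij => f.1.injective (congrArg Subtype.val hij), fun W => by
      have hW : W.1 ∈ (ofOrdered f.1).1 := by rw [f.2]; exact W.2
      obtain ⟨i, -, hi⟩ := Finset.mem_map.1 hW
      exact ⟨i, Subtype.ext hi⟩⟩
  invFun e := ⟨OrderedLineDecomposition.ofEquiv D e, Subtype.ext <| Finset.ext fun W => by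
    simp only [ofOrdered, OrderedLineDecomposition.ofEquiv, Finset.mem_map, Finset.mem_univ,
      true_and, Function.Embedding.coeFn_mk]
    exact ⟨by rintro ⟨i, rfl⟩; exact (e i).2,
      fun hW => ⟨e.symm ⟨W, hW⟩, by simp⟩⟩⟩
  left_inv f := rfl
  right_inv e := Equiv.ext fun i => rfl

theorem card_ordered [Finite V] :
    Nat.card (OrderedLineDecomposition K V n) =
      Nat.card (LineDecomposition K V n) * n.factorial := by
  refine Nat.card_eq_card_mul_of_card_fiber ofOrdered fun D => ?_
  rw [Nat.card_congr (ofOrderedFiberEquiv D)]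
  classical
  rw [Nat.card_eq_fintype_card,
    Fintype.card_equiv (Fintype.equivFinOfCardEq (by simpa using D.2.1)).symm, Fintype.card_fin]

end LineDecomposition

namespace Diagonalization

def lineDecomposition (p : Diagonalization K V n) : LineDecomposition K V n :=
  ⟨p.1.2, p.2.1, p.2.2.1, p.2.2.2.1, p.2.2.2.2.1, fun W hW => (p.2.2.2.2.2 W hW).1⟩

def lineDecompositionFiberEquiv (D : LineDecomposition K V n) :
    {p // lineDecomposition p = D} ≃
      {α : V →ₗ[K] V //
        ∀ W : D.1, ∃ c : K, ∀ x ∈ (W : Submodule K V), α x = c • x} where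
  toFun p := ⟨p.1.1.1, fun W => (p.1.2.2.2.2.2 W.1 (by
    have hp : p.1.1.2 = D.1 := congrArg Subtype.val p.2
    rw [hp]; exact W.2)).2⟩
  invFun α := ⟨⟨(α.1, D.1), D.2.1, D.2.2.1, D.2.2.2.1, D.2.2.2.2.1,
    fun W hW => ⟨D.2.2.2.2.2 W hW, α.2 ⟨W, hW⟩⟩⟩, rfl⟩
  left_inv p := by
    obtain ⟨⟨⟨α, _⟩, _⟩, rfl⟩ := p
    rfl
  right_inv α := rfl

theorem card_eq [Fintype K] [Finite V] :
    Nat.card (Diagonalization K V n) =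
      Nat.card (LineDecomposition K V n) * Fintype.card K ^ n := by
  classical
  refine Nat.card_eq_card_mul_of_card_fiber lineDecomposition fun D => ?_
  rw [Nat.card_congr (lineDecompositionFiberEquiv D),
    D.isInternal.card_scalar_on_summands fun W => D.ne_bot W.2, Nat.card_fun,
    Nat.card_eq_fintype_card, Nat.card_eq_fintype_card, Fintype.card_coe, D.2.1]

theorem card_mul_eq [Fintype K] [Finite V] (hn : finrank K V = n) :
    Nat.card (Diagonalization K V n) * (n.factorial * (Fintype.card K - 1) ^ n) =
      Fintype.card K ^ n * Nat.card {s : Fin n → V // LinearIndependent K s} := by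
  rw [card_eq, OrderedLineDecomposition.card_linearIndependent hn,
    LineDecomposition.card_ordered]
  ring

end Diagonalization

end

theorem gammaQ_eq_card_linearIndependent (F : Type) [Field F] [Fintype F] (n : ℕ) :
    gammaQ (Fintype.card F) n = Nat.card {s : Fin n → Fin n → F // LinearIndependent F s} := by
  rw [card_linearIndependent (by simp), finrank_fin_fun, gammaQ,
    Fin.prod_univ_eq_prod_range (fun i => Fintype.card F ^ n - Fintype.card F ^ i)]

theorem diagCount_mul_eq (F : Type) [Field F] [Fintype F] (n : ℕ) :
    diagCount F n * (n.factorial * (Fintype.card F - 1) ^ n) =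
      Fintype.card F ^ n * gammaQ (Fintype.card F) n := by
  rw [gammaQ_eq_card_linearIndependent]
  exact Diagonalization.card_mul_eq (by simp)

/-- The generating series of diagonalizations of endomorphisms is `exp(qx/(q-1))`. -/
theorem diagonalization_generating_series (F : Type) [Field F] [Fintype F] :
    PowerSeries.mk (fun n => (diagCount F n : ℚ) / (gammaQ (Fintype.card F) n : ℚ)) =
      PowerSeries.rescale
        ((Fintype.card F : ℚ) / ((Fintype.card F : ℚ) - 1)) (PowerSeries.exp ℚ) := by
  ext n
  have hq : 1 < Fintype.card F := Fintype.one_lt_card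
  have hγ : (gammaQ (Fintype.card F) n : ℚ) ≠ 0 := by
    have : Nonempty {s : Fin n → Fin n → F // LinearIndependent F s} :=
      ⟨⟨_, (Pi.basisFun F (Fin n)).linearIndependent⟩⟩
    rw [gammaQ_eq_card_linearIndependent]
    exact_mod_cast Nat.card_pos.ne'
  have hq1 : (Fintype.card F : ℚ) - 1 ≠ 0 := by
    rw [sub_ne_zero]
    exact_mod_cast hq.ne'
  have hcount : (diagCount F n : ℚ) * (n.factorial * (Fintype.card F - 1) ^ n) =
      Fintype.card F ^ n * gammaQ (Fintype.card F) n := by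
    rw [← Nat.cast_one, ← Nat.cast_sub hq.le]
    exact_mod_cast diagCount_mul_eq F n
  rw [PowerSeries.coeff_mk, PowerSeries.coeff_rescale, PowerSeries.coeff_exp,
    Algebra.algebraMap_self, RingHom.id_apply, div_pow, div_eq_iff hγ]
  field_simp
  linear_combination hcount
end
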